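/- arXiv:2502.17012 — 5 statements merged into one kernel-verified Lean document; each statement's English description precedes it below -/
import Mathlib

section
/- For every x ∈ X, the set of feasible trajectories F(x), viewed as a subset of the product space X^ℕ with the product topology, is compact and nonempty. -/
theorem stmt2 (b : ℝ) (hb : 0 < b) (Ω : ℕ → Set (ℝ × ℝ))
    (hΩsub : ∀ t, Ω t ⊆ Set.Icc (0:ℝ) b ×ˢ Set.Icc (0:ℝ) b)
    (hΩne : ∀ t, (Ω t).Nonempty) (hΩcl : ∀ t, IsClosed (Ω t))
    (hΩsec : ∀ t, ∀ x ∈ Set.Icc (0:ℝ) b, ∃ y, (x, y) ∈ Ω t)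
    (x : ℝ) (hx : x ∈ Set.Icc (0:ℝ) b) :
    IsCompact {f : ℕ → ℝ | f 0 = x ∧ ∀ t, (f t, f (t+1)) ∈ Ω t} ∧
    Set.Nonempty {f : ℕ → ℝ | f 0 = x ∧ ∀ t, (f t, f (t+1)) ∈ Ω t} := by
  constructor
  · apply IsCompact.of_isClosed_subset
      (isCompact_univ_pi (fun _ : ℕ => isCompact_Icc (a := (0:ℝ)) (b := b)))
    · have : {f : ℕ → ℝ | f 0 = x ∧ ∀ t, (f t, f (t+1)) ∈ Ω t}
          = {f : ℕ → ℝ | f 0 = x} ∩ ⋂ t, {f : ℕ → ℝ | (f t, f (t+1)) ∈ Ω t} := by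
        ext f; simp [Set.mem_iInter]
      rw [this]
      refine IsClosed.inter (isClosed_eq (continuous_apply 0) continuous_const) ?_
      refine isClosed_iInter fun t => IsClosed.preimage ?_ (hΩcl t)
      exact (continuous_apply t).prodMk (continuous_apply (t+1))
    · rintro f ⟨hf0, hfs⟩ i -
      cases i with
      | zero => simpa [hf0] using hx
      | succ t => exact (hΩsub t (hfs t)).2
  · have key : ∀ t (y : ℝ), y ∈ Set.Icc (0:ℝ) b →
        ∃ z, z ∈ Set.Icc (0:ℝ) b ∧ (y, z) ∈ Ω t := by
      intro t y hy
      obtain ⟨z, hz⟩ := hΩsec t y hy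
      exact ⟨z, (hΩsub t hz).2, hz⟩
    choose next hnext1 hnext2 using key
    let g : ℕ → {y : ℝ // y ∈ Set.Icc (0:ℝ) b} := fun n =>
      Nat.rec ⟨x, hx⟩ (fun t p => ⟨next t p.1 p.2, hnext1 t p.1 p.2⟩) n
    exact ⟨fun n => (g n).1, rfl, fun t => hnext2 t (g t).1 (g t).2⟩
end

section
/- For every x ∈ X there exists an optimal trajectory: some ⟨x_t⟩ ∈ F(x) such that ∑_{t=0}^∞ p_t x_t ≥ ∑_{t=0}^∞ p_t y_t for all ⟨y_t⟩ ∈ F(x). -/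
noncomputable def trajAux (b x : ℝ) (Ω : ℕ → Set (ℝ × ℝ))
    (hΩsub : ∀ t, Ω t ⊆ Set.Icc (0:ℝ) b ×ˢ Set.Icc (0:ℝ) b)
    (sec : ∀ t, ∀ z ∈ Set.Icc (0:ℝ) b, ∃ y, (z, y) ∈ Ω t)
    (hx : x ∈ Set.Icc (0:ℝ) b) : ℕ → {y : ℝ // y ∈ Set.Icc (0:ℝ) b}
  | 0 => ⟨x, hx⟩
  | n+1 =>
    let xn := trajAux b x Ω hΩsub sec hx n
    ⟨(sec n xn.1 xn.2).choose, (hΩsub n (sec n xn.1 xn.2).choose_spec).2⟩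

theorem stmt4 (b : ℝ) (hb : 0 < b) (Ω : ℕ → Set (ℝ × ℝ))
    (hΩsub : ∀ t, Ω t ⊆ Set.Icc (0:ℝ) b ×ˢ Set.Icc (0:ℝ) b)
    (hΩne : ∀ t, (Ω t).Nonempty) (hΩcl : ∀ t, IsClosed (Ω t))
    (hΩcv : ∀ t, Convex ℝ (Ω t))
    (hΩsec : ∀ t, ∀ x ∈ Set.Icc (0:ℝ) b, ∃ y, (x, y) ∈ Ω t)
    (p : ℕ → ℝ) (hp : Summable (fun t => |p t|))
    (x : ℝ) (hx : x ∈ Set.Icc (0:ℝ) b) :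
    ∃ f : ℕ → ℝ, (f 0 = x ∧ ∀ t, (f t, f (t+1)) ∈ Ω t) ∧
      ∀ g : ℕ → ℝ, (g 0 = x ∧ ∀ t, (g t, g (t+1)) ∈ Ω t) →
        ∑' t, p t * g t ≤ ∑' t, p t * f t := by
  classical
  set K : Set (ℕ → ℝ) := Set.pi Set.univ (fun _ => Set.Icc (0:ℝ) b) with hK
  set S : Set (ℕ → ℝ) :=
    {f | f 0 = x} ∩ {f | ∀ t, (f t, f (t+1)) ∈ Ω t} ∩ K with hSdef
  have memK : ∀ f : ℕ → ℝ, f 0 = x → (∀ t, (f t, f (t+1)) ∈ Ω t) → f ∈ K := by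
    intro f h0 hΩf n _
    cases n with
    | zero => simpa [h0] using hx
    | succ m => exact (hΩsub m (hΩf m)).2
  have memS : ∀ f : ℕ → ℝ, f 0 = x → (∀ t, (f t, f (t+1)) ∈ Ω t) → f ∈ S :=
    fun f h0 hf => ⟨⟨h0, hf⟩, memK f h0 hf⟩
  have Sne : S.Nonempty := by
    set F : ℕ → {y : ℝ // y ∈ Set.Icc (0:ℝ) b} := trajAux b x Ω hΩsub hΩsec hx with hF
    have h0 : (F 0).1 = x := by simp [hF, trajAux]
    have hΩF : ∀ t, ((F t).1, (F (t+1)).1) ∈ Ω t := by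
      intro t
      have hFe : (F (t+1)).1 = (hΩsec t (F t).1 (F t).2).choose := by
        rw [hF]; rfl
      rw [hFe]
      exact (hΩsec t (F t).1 (F t).2).choose_spec
    exact ⟨fun n => (F n).1, memS _ h0 hΩF⟩
  have Kcpt : IsCompact K := isCompact_univ_pi (fun _ => isCompact_Icc)
  have Scl : IsClosed S := by
    have h1 : IsClosed {f : ℕ → ℝ | f 0 = x} :=
      isClosed_eq (continuous_apply 0) continuous_const
    have h2 : IsClosed {f : ℕ → ℝ | ∀ t, (f t, f (t+1)) ∈ Ω t} := by
      rw [Set.setOf_forall]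
      exact isClosed_iInter fun t =>
        (hΩcl t).preimage ((continuous_apply t).prodMk (continuous_apply (t+1)))
    exact (h1.inter h2).inter (isClosed_set_pi (fun _ _ => isClosed_Icc))
  have Scpt : IsCompact S := Kcpt.of_isClosed_subset Scl Set.inter_subset_right
  -- the clamped objective
  set c : ℝ → ℝ := fun v => max 0 (min v b) with hc
  have hcmem : ∀ v, c v ∈ Set.Icc (0:ℝ) b := fun v =>
    ⟨le_max_left _ _, max_le hb.le (min_le_right _ _)⟩
  have hcid : ∀ v ∈ Set.Icc (0:ℝ) b, c v = v := fun v hv => by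
    simp [hc, min_eq_left hv.2, max_eq_right hv.1]
  set φ : (ℕ → ℝ) → ℝ := fun f => ∑' t, p t * c (f t) with hφ
  have hφc : Continuous φ := by
    apply continuous_tsum (u := fun t => |p t| * b)
    · intro t
      exact continuous_const.mul
        (continuous_const.max ((continuous_apply t).min continuous_const))
    · exact hp.mul_right b
    · intro n f
      have h := hcmem (f n)
      rw [Real.norm_eq_abs, abs_mul, abs_of_nonneg h.1]
      exact mul_le_mul_of_nonneg_left h.2 (abs_nonneg _)
  obtain ⟨f, hfS, hmax⟩ := Scpt.exists_isMaxOn Sne hφc.continuousOn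
  refine ⟨f, hfS.1, fun g hg => ?_⟩
  have hgS : g ∈ S := memS g hg.1 hg.2
  have hle : φ g ≤ φ f := hmax hgS
  calc ∑' t, p t * g t = φ g :=
        (tsum_congr fun t => by rw [hcid _ (hgS.2 t (Set.mem_univ t))]).symm
    _ ≤ φ f := hle
    _ = ∑' t, p t * f t := tsum_congr fun t => by rw [hcid _ (hfS.2 t (Set.mem_univ t))]
end

section
/- (Euler condition plus transversality implies optimality.) Let ⟨x_t⟩ ∈ F(x) and suppose there is a sequence ⟨q_t⟩ of nonnegative reals such that (i) for all t ∈ ℕ and all (y,z) ∈ Ω_t: p_t x_t + q_{t+1} x_{t+1} − q_t x_t ≥ p_t y + q_{t+1} z − q_t y, and (ii) q_t x_t → 0 as t → ∞. Then ⟨x_t⟩ is an optimal trajectory from x. -/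
theorem stmt6 (b : ℝ) (hb : 0 < b) (Ω : ℕ → Set (ℝ × ℝ))
    (hΩsub : ∀ t, Ω t ⊆ Set.Icc (0:ℝ) b ×ˢ Set.Icc (0:ℝ) b)
    (hΩne : ∀ t, (Ω t).Nonempty) (hΩcl : ∀ t, IsClosed (Ω t))
    (hΩcv : ∀ t, Convex ℝ (Ω t))
    (hΩsec : ∀ t, ∀ x ∈ Set.Icc (0:ℝ) b, ∃ y, (x, y) ∈ Ω t)
    (p : ℕ → ℝ) (hp : Summable (fun t => |p t|))
    (x : ℝ) (hx : x ∈ Set.Icc (0:ℝ) b)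
    (xs : ℕ → ℝ) (hxs : xs 0 = x ∧ ∀ t, (xs t, xs (t+1)) ∈ Ω t)
    (q : ℕ → ℝ) (hq : ∀ t, 0 ≤ q t)
    (euler : ∀ t, ∀ yz ∈ Ω t,
      p t * yz.1 + q (t+1) * yz.2 - q t * yz.1 ≤
        p t * xs t + q (t+1) * xs (t+1) - q t * xs t)
    (trans : Filter.Tendsto (fun t => q t * xs t) Filter.atTop (nhds 0)) :
    ∀ ys : ℕ → ℝ, (ys 0 = x ∧ ∀ t, (ys t, ys (t+1)) ∈ Ω t) →
      ∑' t, p t * ys t ≤ ∑' t, p t * xs t := by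
  rintro ys ⟨hys0, hysΩ⟩
  obtain ⟨hxs0, hxsΩ⟩ := hxs
  -- membership in Icc
  have hxsIcc : ∀ t, xs t ∈ Set.Icc (0:ℝ) b := by
    intro t
    cases t with
    | zero => rw [hxs0]; exact hx
    | succ n => exact (hΩsub n (hxsΩ n)).2
  have hysIcc : ∀ t, ys t ∈ Set.Icc (0:ℝ) b := by
    intro t
    cases t with
    | zero => rw [hys0]; exact hx
    | succ n => exact (hΩsub n (hysΩ n)).2
  -- summability
  have key : ∀ (zs : ℕ → ℝ), (∀ t, zs t ∈ Set.Icc (0:ℝ) b) →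
      Summable (fun t => p t * zs t) := by
    intro zs hz
    apply Summable.of_abs
    apply Summable.of_nonneg_of_le (fun t => abs_nonneg _)
      (fun t => ?_) (hp.mul_right b)
    rw [abs_mul]
    have := (hz t)
    calc |p t| * |zs t| ≤ |p t| * b := by
          apply mul_le_mul_of_nonneg_left _ (abs_nonneg _)
          rw [abs_of_nonneg this.1]; exact this.2
      _ = |p t| * b := rfl
  have hsx := key xs hxsIcc
  have hsy := key ys hysIcc
  have hsd : Summable (fun t => p t * xs t - p t * ys t) := hsx.sub hsy
  -- telescoping bound on partial sums
  have tele : ∀ T, (q T * ys T - q 0 * ys 0) - (q T * xs T - q 0 * xs 0) ≤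
      ∑ t ∈ Finset.range T, (p t * xs t - p t * ys t) := by
    intro T
    induction T with
    | zero => simp
    | succ n ih =>
      rw [Finset.sum_range_succ]
      have he := euler n (ys n, ys (n+1)) (hysΩ n)
      simp only at he
      nlinarith [he]
  have bound : ∀ T, -(q T * xs T) ≤ ∑ t ∈ Finset.range T, (p t * xs t - p t * ys t) := by
    intro T
    refine le_trans ?_ (tele T)
    have h1 : 0 ≤ q T * ys T := mul_nonneg (hq T) (hysIcc T).1
    rw [hxs0, hys0]
    nlinarith
  -- take limits
  have hlim1 : Filter.Tendsto (fun T => -(q T * xs T)) Filter.atTop (nhds 0) := by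
    simpa using trans.neg
  have hlim2 : Filter.Tendsto (fun T => ∑ t ∈ Finset.range T, (p t * xs t - p t * ys t))
      Filter.atTop (nhds (∑' t, (p t * xs t - p t * ys t))) := hsd.hasSum.tendsto_sum_nat
  have h0 : (0:ℝ) ≤ ∑' t, (p t * xs t - p t * ys t) :=
    le_of_tendsto_of_tendsto' hlim1 hlim2 bound
  rw [Summable.tsum_sub hsx hsy] at h0
  linarith
end

section
/- The optimal value function V is continuous on X = [0,b], including at the endpoints 0 and b. -/
open Filter Topology Set

namespace Stmt8Aux

noncomputable def proj (b y : ℝ) : ℝ := max 0 (min y b)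

noncomputable def gg (b : ℝ) (p : ℕ → ℝ) (f : ℕ → ℝ) : ℝ := ∑' t, p t * proj b (f t)

def S (Ω : ℕ → Set (ℝ × ℝ)) (x : ℝ) : Set (ℕ → ℝ) :=
  {f | f 0 = x ∧ ∀ t, (f t, f (t+1)) ∈ Ω t}

noncomputable def V (b : ℝ) (p : ℕ → ℝ) (Ω : ℕ → Set (ℝ × ℝ)) (x : ℝ) : ℝ :=
  sSup ((fun f : ℕ → ℝ => ∑' t, p t * f t) '' S Ω x)

variable {b : ℝ} {p : ℕ → ℝ} {Ω : ℕ → Set (ℝ × ℝ)}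

lemma proj_mem (hb : 0 ≤ b) (y : ℝ) : proj b y ∈ Icc 0 b := by
  constructor
  · exact le_max_left _ _
  · simp only [proj, max_le_iff]
    exact ⟨hb, min_le_right _ _⟩

lemma proj_eq {y : ℝ} (hy : y ∈ Icc 0 b) : proj b y = y := by
  simp only [proj, min_eq_left hy.2, max_eq_right hy.1]

lemma abs_proj_le (hb : 0 ≤ b) (y : ℝ) : |proj b y| ≤ b := by
  have h := proj_mem hb y
  rw [abs_le]
  exact ⟨by linarith [h.1, hb], h.2⟩

lemma continuous_gg (hb : 0 ≤ b) (hp : Summable fun t => |p t|) : Continuous (gg b p) := by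
  apply continuous_tsum (u := fun t => |p t| * b)
  · intro t
    have : Continuous (proj b) := by
      unfold proj; fun_prop
    exact continuous_const.mul (this.comp (continuous_apply t))
  · exact hp.mul_right b
  · intro n f
    rw [Real.norm_eq_abs, abs_mul]
    exact mul_le_mul_of_nonneg_left (abs_proj_le hb _) (abs_nonneg _)

lemma abs_gg_le (hb : 0 ≤ b) (hp : Summable fun t => |p t|) (f : ℕ → ℝ) :
    |gg b p f| ≤ ∑' t, |p t| * b := by
  have hs : Summable fun t => |p t * proj b (f t)| := by
    apply (hp.mul_right b).of_nonneg_of_le (fun n => abs_nonneg _)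
    intro n
    rw [abs_mul]
    exact mul_le_mul_of_nonneg_left (abs_proj_le hb _) (abs_nonneg _)
  have h1 : ‖∑' t, p t * proj b (f t)‖ ≤ ∑' t, ‖p t * proj b (f t)‖ :=
    norm_tsum_le_tsum_norm (by simpa only [Real.norm_eq_abs] using hs)
  simp only [Real.norm_eq_abs] at h1
  calc |gg b p f| ≤ ∑' t, |p t * proj b (f t)| := h1
    _ ≤ ∑' t, |p t| * b := by
        apply Summable.tsum_le_tsum _ hs (hp.mul_right b)
        intro n
        rw [abs_mul]
        exact mul_le_mul_of_nonneg_left (abs_proj_le hb _) (abs_nonneg _)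

lemma mem_Icc_of_mem_S (hΩsub : ∀ t, Ω t ⊆ Set.Icc (0:ℝ) b ×ˢ Set.Icc (0:ℝ) b)
    {x : ℝ} {f : ℕ → ℝ} (hf : f ∈ S Ω x) : ∀ t, f t ∈ Icc (0:ℝ) b := by
  intro t
  cases t with
  | zero => exact (hΩsub 0 (hf.2 0)).1
  | succ n => exact (hΩsub n (hf.2 n)).2

lemma gg_eq {f : ℕ → ℝ} (hf : ∀ t, f t ∈ Icc (0:ℝ) b) :
    gg b p f = ∑' t, p t * f t := by
  unfold gg
  exact tsum_congr fun t => by rw [proj_eq (hf t)]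

lemma summable_mul (hp : Summable fun t => |p t|) {f : ℕ → ℝ}
    (hf : ∀ t, f t ∈ Icc (0:ℝ) b) : Summable fun t => p t * f t := by
  apply Summable.of_abs
  apply (hp.mul_right b).of_nonneg_of_le (fun n => abs_nonneg _)
  intro n
  rw [abs_mul]
  refine mul_le_mul_of_nonneg_left ?_ (abs_nonneg _)
  rw [abs_le]
  exact ⟨by linarith [(hf n).1, (hf n).2, (hf 0).1, (hf 0).2], (hf n).2⟩

lemma isClosed_S (hΩcl : ∀ t, IsClosed (Ω t)) (x : ℝ) : IsClosed (S Ω x) := by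
  have : S Ω x = {f : ℕ → ℝ | f 0 = x} ∩ ⋂ t, (fun f : ℕ → ℝ => (f t, f (t+1))) ⁻¹' Ω t := by
    ext f; simp [S, Set.mem_iInter]
  rw [this]
  exact (isClosed_eq (continuous_apply 0) continuous_const).inter
    (isClosed_iInter fun t => (hΩcl t).preimage ((continuous_apply t).prodMk (continuous_apply (t+1))))

lemma S_subset_pi (hΩsub : ∀ t, Ω t ⊆ Set.Icc (0:ℝ) b ×ˢ Set.Icc (0:ℝ) b) (x : ℝ) :
    S Ω x ⊆ Set.pi Set.univ (fun _ : ℕ => Icc (0:ℝ) b) := by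
  intro f hf t _
  exact mem_Icc_of_mem_S hΩsub hf t

lemma isCompact_S (hΩsub : ∀ t, Ω t ⊆ Set.Icc (0:ℝ) b ×ˢ Set.Icc (0:ℝ) b)
    (hΩcl : ∀ t, IsClosed (Ω t)) (x : ℝ) : IsCompact (S Ω x) :=
  (isCompact_univ_pi fun _ => isCompact_Icc).of_isClosed_subset (isClosed_S hΩcl x)
    (S_subset_pi hΩsub x)

lemma nonempty_S (hΩsub : ∀ t, Ω t ⊆ Set.Icc (0:ℝ) b ×ˢ Set.Icc (0:ℝ) b)
    (hΩsec : ∀ t, ∀ x ∈ Set.Icc (0:ℝ) b, ∃ y, (x, y) ∈ Ω t)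
    {x : ℝ} (hx : x ∈ Icc (0:ℝ) b) : (S Ω x).Nonempty := by
  choose y hy using hΩsec
  let F : ℕ → {z : ℝ // z ∈ Set.Icc (0:ℝ) b} := fun n =>
    Nat.rec ⟨x, hx⟩ (fun t z => ⟨y t z.1 z.2, (hΩsub t (hy t z.1 z.2)).2⟩) n
  refine ⟨fun n => (F n).1, rfl, fun t => ?_⟩
  exact hy t (F t).1 (F t).2

lemma V_eq (hΩsub : ∀ t, Ω t ⊆ Set.Icc (0:ℝ) b ×ˢ Set.Icc (0:ℝ) b) (x : ℝ) :
    V b p Ω x = sSup (gg b p '' S Ω x) := by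
  unfold V
  congr 1
  apply Set.image_congr
  intro f hf
  exact (gg_eq (mem_Icc_of_mem_S hΩsub hf)).symm

lemma bddAbove_gg (hb : 0 ≤ b) (hp : Summable fun t => |p t|) (x : ℝ) :
    BddAbove (gg b p '' S Ω x) := by
  refine ⟨∑' t, |p t| * b, ?_⟩
  rintro r ⟨f, _, rfl⟩
  exact (abs_le.1 (abs_gg_le hb hp f)).2

lemma exists_opt (hb : 0 ≤ b) (hp : Summable fun t => |p t|)
    (hΩsub : ∀ t, Ω t ⊆ Set.Icc (0:ℝ) b ×ˢ Set.Icc (0:ℝ) b)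
    (hΩcl : ∀ t, IsClosed (Ω t))
    (hΩsec : ∀ t, ∀ x ∈ Set.Icc (0:ℝ) b, ∃ y, (x, y) ∈ Ω t)
    {x : ℝ} (hx : x ∈ Icc (0:ℝ) b) :
    ∃ f ∈ S Ω x, gg b p f = V b p Ω x := by
  obtain ⟨f, hfS, hfmax⟩ := (isCompact_S hΩsub hΩcl x).exists_isMaxOn
    (nonempty_S hΩsub hΩsec hx) ((continuous_gg hb hp).continuousOn)
  refine ⟨f, hfS, ?_⟩
  rw [V_eq hΩsub]
  apply le_antisymm
  · exact le_csSup (bddAbove_gg hb hp x) ⟨f, hfS, rfl⟩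
  · exact csSup_le ⟨_, ⟨f, hfS, rfl⟩⟩ (by rintro r ⟨g, hgS, rfl⟩; exact hfmax hgS)

lemma le_V (hb : 0 ≤ b) (hp : Summable fun t => |p t|)
    (hΩsub : ∀ t, Ω t ⊆ Set.Icc (0:ℝ) b ×ˢ Set.Icc (0:ℝ) b)
    {x : ℝ} {f : ℕ → ℝ} (hf : f ∈ S Ω x) : gg b p f ≤ V b p Ω x := by
  rw [V_eq hΩsub]
  exact le_csSup (bddAbove_gg hb hp x) ⟨f, hf, rfl⟩

lemma abs_V_le (hb : 0 ≤ b) (hp : Summable fun t => |p t|)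
    (hΩsub : ∀ t, Ω t ⊆ Set.Icc (0:ℝ) b ×ˢ Set.Icc (0:ℝ) b)
    (hΩcl : ∀ t, IsClosed (Ω t))
    (hΩsec : ∀ t, ∀ x ∈ Set.Icc (0:ℝ) b, ∃ y, (x, y) ∈ Ω t)
    {x : ℝ} (hx : x ∈ Icc (0:ℝ) b) : |V b p Ω x| ≤ ∑' t, |p t| * b := by
  obtain ⟨f, _, hfV⟩ := exists_opt hb hp hΩsub hΩcl hΩsec hx
  rw [← hfV]
  exact abs_gg_le hb hp f

lemma concaveV (hb : 0 ≤ b) (hp : Summable fun t => |p t|)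
    (hΩsub : ∀ t, Ω t ⊆ Set.Icc (0:ℝ) b ×ˢ Set.Icc (0:ℝ) b)
    (hΩcl : ∀ t, IsClosed (Ω t)) (hΩcv : ∀ t, Convex ℝ (Ω t))
    (hΩsec : ∀ t, ∀ x ∈ Set.Icc (0:ℝ) b, ∃ y, (x, y) ∈ Ω t)
    {a c θ : ℝ} (ha : a ∈ Icc (0:ℝ) b) (hc : c ∈ Icc (0:ℝ) b)
    (hθ0 : 0 ≤ θ) (hθ1 : θ ≤ 1) :
    (1-θ) * V b p Ω a + θ * V b p Ω c ≤ V b p Ω ((1-θ)*a + θ*c) := by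
  obtain ⟨fa, hfaS, hfaV⟩ := exists_opt hb hp hΩsub hΩcl hΩsec ha
  obtain ⟨fc, hfcS, hfcV⟩ := exists_opt hb hp hΩsub hΩcl hΩsec hc
  set h : ℕ → ℝ := fun n => (1-θ) * fa n + θ * fc n with hh
  have hhS : h ∈ S Ω ((1-θ)*a + θ*c) := by
    constructor
    · simp only [hh, hfaS.1, hfcS.1]
    · intro n
      have hmem := hΩcv n (hfaS.2 n) (hfcS.2 n) (by linarith : (0:ℝ) ≤ 1-θ) hθ0
        (by ring : (1-θ) + θ = 1)
      simpa [hh, Prod.smul_mk, smul_eq_mul] using hmem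
  have hIa := mem_Icc_of_mem_S hΩsub hfaS
  have hIc := mem_Icc_of_mem_S hΩsub hfcS
  have hIh := mem_Icc_of_mem_S hΩsub hhS
  have key : gg b p h = (1-θ) * gg b p fa + θ * gg b p fc := by
    rw [gg_eq hIh, gg_eq hIa, gg_eq hIc]
    have h1 : (fun n => p n * h n) = fun n => (1-θ) * (p n * fa n) + θ * (p n * fc n) := by
      funext n; simp only [hh]; ring
    rw [h1, Summable.tsum_add ((summable_mul hp hIa).mul_left _) ((summable_mul hp hIc).mul_left _),
      tsum_mul_left, tsum_mul_left]
  calc (1-θ) * V b p Ω a + θ * V b p Ω c = gg b p h := by rw [key, hfaV, hfcV]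
    _ ≤ V b p Ω ((1-θ)*a + θ*c) := le_V hb hp hΩsub hhS

lemma usc (hb : 0 ≤ b) (hp : Summable fun t => |p t|)
    (hΩsub : ∀ t, Ω t ⊆ Set.Icc (0:ℝ) b ×ˢ Set.Icc (0:ℝ) b)
    (hΩcl : ∀ t, IsClosed (Ω t))
    (hΩsec : ∀ t, ∀ x ∈ Set.Icc (0:ℝ) b, ∃ y, (x, y) ∈ Ω t)
    {x0 : ℝ} (hx0 : x0 ∈ Icc (0:ℝ) b) {y : ℝ} (hy : V b p Ω x0 < y) :
    ∀ᶠ x in 𝓝[Icc (0:ℝ) b] x0, V b p Ω x < y := by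
  by_contra hcon
  rw [Filter.not_eventually] at hcon
  set l := (𝓝[Icc (0:ℝ) b] x0) ⊓ 𝓟 {x | ¬ V b p Ω x < y} with hl
  have hlne : l.NeBot := Filter.frequently_iff_neBot.1 hcon
  have hsel : ∀ x : ℝ, ∃ f : ℕ → ℝ, x ∈ Icc (0:ℝ) b → f ∈ S Ω x ∧ gg b p f = V b p Ω x := by
    intro x
    by_cases hx : x ∈ Icc (0:ℝ) b
    · obtain ⟨f, hfS, hfV⟩ := exists_opt hb hp hΩsub hΩcl hΩsec hx
      exact ⟨f, fun _ => ⟨hfS, hfV⟩⟩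
    · exact ⟨fun _ => 0, fun h => absurd h hx⟩
  choose sel hselspec using hsel
  have hevK : ∀ᶠ x in l, x ∈ Icc (0:ℝ) b :=
    Filter.mem_of_superset (Filter.mem_inf_of_left self_mem_nhdsWithin) (fun x hx => hx)
  have hevy : ∀ᶠ x in l, y ≤ V b p Ω x := by
    have hm : {x : ℝ | ¬ V b p Ω x < y} ∈ l :=
      Filter.mem_inf_of_right (Filter.mem_principal_self _)
    filter_upwards [hm] with x hx
    exact not_lt.1 hx
  set Φ : Set (ℕ → ℝ) := (Set.pi Set.univ fun _ : ℕ => Icc (0:ℝ) b) ∩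
    ⋂ n, ((fun f : ℕ → ℝ => (f n, f (n+1))) ⁻¹' Ω n) with hΦ
  have hΦc : IsCompact Φ := (isCompact_univ_pi fun _ => isCompact_Icc).inter_right
    (isClosed_iInter fun n =>
      (hΩcl n).preimage ((continuous_apply n).prodMk (continuous_apply (n+1))))
  have hSsubΦ : ∀ x, x ∈ Icc (0:ℝ) b → sel x ∈ Φ := fun x hx =>
    ⟨S_subset_pi hΩsub x (hselspec x hx).1, Set.mem_iInter.2 fun n => (hselspec x hx).1.2 n⟩
  set F := Filter.map sel l with hF
  haveI : F.NeBot := hlne.map sel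
  have hFle : F ≤ 𝓟 Φ := by
    rw [Filter.le_principal_iff, hF, Filter.mem_map]
    exact Filter.mem_of_superset hevK (fun x hx => hSsubΦ x hx)
  obtain ⟨fs, hfsΦ, hcl⟩ := hΦc.exists_clusterPt hFle
  have ha : fs 0 = x0 := by
    have h0 : ClusterPt (fs 0) (Filter.map (fun f : ℕ → ℝ => f 0) F) :=
      hcl.map (continuous_apply 0).continuousAt tendsto_map
    have hmm : Filter.map (fun f : ℕ → ℝ => f 0) F = Filter.map (fun x => sel x 0) l := by
      rw [hF, Filter.map_map]; rfl
    have heq : (fun x => sel x 0) =ᶠ[l] id := hevK.mono fun x hx => (hselspec x hx).1.1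
    rw [hmm, Filter.map_congr heq, Filter.map_id] at h0
    have hle : l ≤ 𝓝 x0 := inf_le_left.trans nhdsWithin_le_nhds
    exact eq_of_nhds_neBot (h0.mono hle)
  have hbnd : y ≤ gg b p fs := by
    have h1 : ClusterPt (gg b p fs) (Filter.map (gg b p) F) :=
      hcl.map (continuous_gg hb hp).continuousAt tendsto_map
    have h2 : ∀ᶠ f in F, gg b p f ∈ Ici y := by
      rw [hF, Filter.eventually_map]
      filter_upwards [hevK, hevy] with x hx hyx
      rw [Set.mem_Ici, (hselspec x hx).2]
      exact hyx
    have h3 := h1.mono (Filter.le_principal_iff.2 h2)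
    have h4 := mem_closure_iff_clusterPt.2 h3
    rwa [isClosed_Ici.closure_eq] at h4
  have hfsS : fs ∈ S Ω x0 := ⟨ha, fun n => Set.mem_iInter.1 hfsΦ.2 n⟩
  have := le_V hb hp hΩsub hfsS
  linarith

end Stmt8Aux

theorem stmt8 (b : ℝ) (hb : 0 < b) (Ω : ℕ → Set (ℝ × ℝ))
    (hΩsub : ∀ t, Ω t ⊆ Set.Icc (0:ℝ) b ×ˢ Set.Icc (0:ℝ) b)
    (hΩne : ∀ t, (Ω t).Nonempty) (hΩcl : ∀ t, IsClosed (Ω t))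
    (hΩcv : ∀ t, Convex ℝ (Ω t))
    (hΩsec : ∀ t, ∀ x ∈ Set.Icc (0:ℝ) b, ∃ y, (x, y) ∈ Ω t)
    (p : ℕ → ℝ) (hp : Summable (fun t => |p t|)) :
    ContinuousOn
      (fun x => sSup ((fun f : ℕ → ℝ => ∑' t, p t * f t) ''
        {f : ℕ → ℝ | f 0 = x ∧ ∀ t, (f t, f (t+1)) ∈ Ω t}))
      (Set.Icc (0:ℝ) b) := by
  have hb0 : (0:ℝ) ≤ b := hb.le
  set M := ∑' t, |p t| * b with hM
  have hM0 : 0 ≤ M := tsum_nonneg fun t => mul_nonneg (abs_nonneg _) hb0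
  have h2M : (0:ℝ) < 2*M+1 := by linarith
  have hVb : ∀ x ∈ Set.Icc (0:ℝ) b, |Stmt8Aux.V b p Ω x| ≤ M := fun x hx =>
    Stmt8Aux.abs_V_le hb0 hp hΩsub hΩcl hΩsec hx
  intro x0 hx0
  show Filter.Tendsto (fun x => Stmt8Aux.V b p Ω x) (𝓝[Set.Icc (0:ℝ) b] x0)
    (𝓝 (Stmt8Aux.V b p Ω x0))
  refine tendsto_order.2 ⟨fun y hy => ?_, fun y hy => ?_⟩
  · -- lower semicontinuity via concavity
    have hsplit : Set.Icc (0:ℝ) b = Set.Icc 0 x0 ∪ Set.Icc x0 b :=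
      (Set.Icc_union_Icc_eq_Icc hx0.1 hx0.2).symm
    rw [hsplit, nhdsWithin_union, Filter.eventually_sup]
    constructor
    · -- left side
      rcases eq_or_lt_of_le hx0.1 with h0x | h0x
      · filter_upwards [self_mem_nhdsWithin] with x hx
        have hxx : x = x0 := le_antisymm hx.2 (h0x ▸ hx.1)
        rwa [hxx]
      · set δ := (Stmt8Aux.V b p Ω x0 - y) * x0 / (2*M+1) with hδ
        have hδ0 : 0 < δ := by
          apply div_pos (mul_pos (by linarith) h0x) h2M
        filter_upwards [self_mem_nhdsWithin,
          nhdsWithin_le_nhds (Metric.ball_mem_nhds x0 hδ0)] with x hx hxb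
        rw [Metric.mem_ball, Real.dist_eq] at hxb
        set s := (x0 - x)/x0 with hs
        have hs0 : 0 ≤ s := div_nonneg (by linarith [hx.2]) h0x.le
        have hs1 : s ≤ 1 := by rw [div_le_one h0x]; linarith [hx.1]
        have hxeq : (1-s)*x0 + s*0 = x := by
          rw [hs]; field_simp; ring
        have hcc := Stmt8Aux.concaveV hb0 hp hΩsub hΩcl hΩcv hΩsec hx0
          (Set.left_mem_Icc.2 hb0) hs0 hs1
        rw [hxeq] at hcc
        have hB0 := abs_le.1 (hVb 0 (Set.left_mem_Icc.2 hb0))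
        have hBx0 := abs_le.1 (hVb x0 hx0)
        have hst : s * (2*M+1) < Stmt8Aux.V b p Ω x0 - y := by
          rw [hs, div_mul_eq_mul_div, div_lt_iff₀ h0x]
          have hlt : x0 - x < δ := by
            rcases abs_lt.1 hxb with ⟨h1, h2⟩; linarith
          calc (x0-x)*(2*M+1) < δ*(2*M+1) := mul_lt_mul_of_pos_right hlt h2M
            _ = (Stmt8Aux.V b p Ω x0 - y)*x0 := by
              rw [hδ]; field_simp
        have h1 : s*(Stmt8Aux.V b p Ω x0 - Stmt8Aux.V b p Ω 0) ≤ s*(2*M) :=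
          mul_le_mul_of_nonneg_left (by linarith [hB0.1, hBx0.2]) hs0
        nlinarith [hcc, h1, hst, hs0]
    · -- right side
      rcases eq_or_lt_of_le hx0.2 with hxb' | hxb'
      · filter_upwards [self_mem_nhdsWithin] with x hx
        have hxx : x = x0 := le_antisymm (hxb' ▸ hx.2) hx.1
        rwa [hxx]
      · set δ := (Stmt8Aux.V b p Ω x0 - y) * (b - x0) / (2*M+1) with hδ
        have hδ0 : 0 < δ := by
          apply div_pos (mul_pos (by linarith) (by linarith)) h2M
        filter_upwards [self_mem_nhdsWithin,
          nhdsWithin_le_nhds (Metric.ball_mem_nhds x0 hδ0)] with x hx hxb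
        rw [Metric.mem_ball, Real.dist_eq] at hxb
        set s := (x - x0)/(b - x0) with hs
        have hbx0 : (0:ℝ) < b - x0 := by linarith
        have hs0 : 0 ≤ s := div_nonneg (by linarith [hx.1]) hbx0.le
        have hs1 : s ≤ 1 := by rw [div_le_one hbx0]; linarith [hx.2]
        have hxeq : (1-s)*x0 + s*b = x := by
          rw [hs]; field_simp; ring
        have hcc := Stmt8Aux.concaveV hb0 hp hΩsub hΩcl hΩcv hΩsec hx0
          (Set.right_mem_Icc.2 hb0) hs0 hs1
        rw [hxeq] at hcc
        have hB0 := abs_le.1 (hVb b (Set.right_mem_Icc.2 hb0))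
        have hBx0 := abs_le.1 (hVb x0 hx0)
        have hst : s * (2*M+1) < Stmt8Aux.V b p Ω x0 - y := by
          rw [hs, div_mul_eq_mul_div, div_lt_iff₀ hbx0]
          have hlt : x - x0 < δ := by
            rcases abs_lt.1 hxb with ⟨h1, h2⟩; linarith
          calc (x-x0)*(2*M+1) < δ*(2*M+1) := mul_lt_mul_of_pos_right hlt h2M
            _ = (Stmt8Aux.V b p Ω x0 - y)*(b-x0) := by
              rw [hδ]; field_simp
        have h1 : s*(Stmt8Aux.V b p Ω x0 - Stmt8Aux.V b p Ω b) ≤ s*(2*M) :=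
          mul_le_mul_of_nonneg_left (by linarith [hB0.1, hBx0.2]) hs0
        nlinarith [hcc, h1, hst, hs0]
  · exact Stmt8Aux.usc hb0 hp hΩsub hΩcl hΩsec hx0 hy
end

section
/- In a linear cake-eating problem, suppose p_T ≤ 0, x ≤ y, and there exists an optimal trajectory ⟨y_t⟩ from y at time T with y_{T+1} ≤ x. Then V^T(y) ≤ V^T(x). If moreover p_T < 0 and x < y, then V^T(y) < V^T(x). -/
theorem stmt17 (b : ℝ) (hb : 0 < b) (p : ℕ → ℝ)
    (hp : Summable (fun t => |p t|))
    (V : ℕ → ℝ → ℝ)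
    (hV : ∀ T : ℕ, ∀ y ∈ Set.Icc (0:ℝ) b,
      (∃ f : ℕ → ℝ, (f T = y ∧ (∀ t, T ≤ t → f (t+1) ≤ f t) ∧ (∀ t, T ≤ t → 0 ≤ f t)) ∧
        V T y = ∑' t, p (T + t) * f (T + t)) ∧
      (∀ f : ℕ → ℝ, (f T = y ∧ (∀ t, T ≤ t → f (t+1) ≤ f t) ∧ (∀ t, T ≤ t → 0 ≤ f t)) →
        ∑' t, p (T + t) * f (T + t) ≤ V T y))
    (T : ℕ) (x y : ℝ) (hxm : x ∈ Set.Icc (0:ℝ) b) (hym : y ∈ Set.Icc (0:ℝ) b)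
    (hxy : x ≤ y)
    (g : ℕ → ℝ)
    (hg : g T = y ∧ (∀ t, T ≤ t → g (t+1) ≤ g t) ∧ (∀ t, T ≤ t → 0 ≤ g t))
    (hgopt : V T y = ∑' t, p (T + t) * g (T + t))
    (hgx : g (T+1) ≤ x) :
    (p T ≤ 0 → V T y ≤ V T x) ∧ (p T < 0 → x < y → V T y < V T x) := by
  obtain ⟨hgT, hgmono, hgnn⟩ := hg
  -- modified trajectory starting from x
  set f : ℕ → ℝ := Function.update g T x with hf
  have hfT : f T = x := Function.update_self T x g
  have hfother : ∀ t, t ≠ T → f t = g t := fun t ht => Function.update_of_ne ht x g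
  have hffeas : f T = x ∧ (∀ t, T ≤ t → f (t+1) ≤ f t) ∧ (∀ t, T ≤ t → 0 ≤ f t) := by
    refine ⟨hfT, ?_, ?_⟩
    · intro t ht
      rcases eq_or_ne t T with h | h
      · subst h
        rw [hfT, hfother (t+1) (by omega)]
        exact hgx
      · rw [hfother (t+1) (by omega), hfother t h]
        exact hgmono t ht
    · intro t ht
      rcases eq_or_ne t T with h | h
      · rw [h, hfT]; exact hxm.1
      · rw [hfother t h]; exact hgnn t ht
  -- bound: g (T + t) ≤ y
  have hgb : ∀ t, g (T + t) ≤ y := by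
    intro t
    induction t with
    | zero => simp [hgT]
    | succ n ih =>
      have := hgmono (T + n) (Nat.le_add_right T n)
      calc g (T + (n+1)) = g (T + n + 1) := by ring_nf
        _ ≤ g (T + n) := this
        _ ≤ y := ih
  -- summability
  have hps : Summable (fun t => |p (T + t)|) :=
    hp.comp_injective (fun a c h => by simpa using h)
  have hsumg : Summable (fun t => p (T + t) * g (T + t)) := by
    refine Summable.of_abs (Summable.of_nonneg_of_le (fun t => abs_nonneg _)
      (fun t => ?_) (hps.mul_right b))
    rw [abs_mul]
    have h1 : |g (T + t)| = g (T + t) := abs_of_nonneg (hgnn _ (Nat.le_add_right T t))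
    rw [h1]
    exact mul_le_mul_of_nonneg_left ((hgb t).trans hym.2) (abs_nonneg _)
  have hfb : ∀ t, 0 ≤ f (T + t) ∧ f (T + t) ≤ b := by
    intro t
    rcases eq_or_ne (T + t) T with h | h
    · rw [h, hfT]; exact ⟨hxm.1, hxm.2⟩
    · rw [hfother _ h]
      exact ⟨hgnn _ (Nat.le_add_right T t), (hgb t).trans hym.2⟩
  have hsumf : Summable (fun t => p (T + t) * f (T + t)) := by
    refine Summable.of_abs (Summable.of_nonneg_of_le (fun t => abs_nonneg _)
      (fun t => ?_) (hps.mul_right b))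
    rw [abs_mul, abs_of_nonneg (hfb t).1]
    exact mul_le_mul_of_nonneg_left (hfb t).2 (abs_nonneg _)
  -- tails agree
  have htail : ∀ t : ℕ, p (T + (t+1)) * f (T + (t+1)) = p (T + (t+1)) * g (T + (t+1)) := by
    intro t
    rw [hfother (T + (t+1)) (by omega)]
  have hSf : (∑' t, p (T + t) * f (T + t)) =
      p T * x + ∑' t, p (T + (t+1)) * g (T + (t+1)) := by
    rw [Summable.tsum_eq_zero_add hsumf]
    simp only [Nat.add_zero, hfT, htail]
  have hSg : (∑' t, p (T + t) * g (T + t)) =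
      p T * y + ∑' t, p (T + (t+1)) * g (T + (t+1))  := by
    rw [Summable.tsum_eq_zero_add hsumg]
    simp only [Nat.add_zero, hgT]
  have hVx : (∑' t, p (T + t) * f (T + t)) ≤ V T x := (hV T x hxm).2 f hffeas
  constructor
  · intro hpT
    have : p T * y ≤ p T * x := mul_le_mul_of_nonpos_left hxy hpT
    calc V T y = ∑' t, p (T + t) * g (T + t) := hgopt
      _ ≤ ∑' t, p (T + t) * f (T + t) := by rw [hSf, hSg]; linarith
      _ ≤ V T x := hVx
  · intro hpT hxy'
    have : p T * y < p T * x := mul_lt_mul_of_neg_left hxy' hpT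
    calc V T y = ∑' t, p (T + t) * g (T + t) := hgopt
      _ < ∑' t, p (T + t) * f (T + t) := by rw [hSf, hSg]; linarith
      _ ≤ V T x := hVx
end
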